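/- arXiv:0912.2574 — 2 statements merged into one kernel-verified Lean document; each statement's English description precedes it below -/
import Mathlib

section
/- Let V be a finite-dimensional complex inner product space with a distinguished vector j with ⟨j,j⟩ = N > 0, and let V^0 = span(j), and V^+, V^- be subspaces such that V = V^0 ⊕ V^+ ⊕ V^- is an orthogonal decomposition. If v^+ ∈ V^0 ⊕ V^+ and v^- ∈ V^0 ⊕ V^-, then ⟨v^+, v^-⟩ = ⟨v^+, j⟩ · ⟨j, v^-⟩ / N. -/
open scoped InnerProductSpace

theorem stmt_7 {V : Type*} [NormedAddCommGroup V] [InnerProductSpace ℂ V]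
    (j : V) (N : ℝ) (hN : 0 < N) (hj : ⟪j, j⟫_ℂ = (N : ℂ))
    (Vp Vm : Submodule ℂ V)
    (hspan : (ℂ ∙ j) ⊔ Vp ⊔ Vm = ⊤)
    (h0p : ∀ x ∈ ℂ ∙ j, ∀ y ∈ Vp, ⟪x, y⟫_ℂ = 0)
    (h0m : ∀ x ∈ ℂ ∙ j, ∀ y ∈ Vm, ⟪x, y⟫_ℂ = 0)
    (hpm : ∀ x ∈ Vp, ∀ y ∈ Vm, ⟪x, y⟫_ℂ = 0)
    (vp vm : V) (hvp : vp ∈ (ℂ ∙ j) ⊔ Vp) (hvm : vm ∈ (ℂ ∙ j) ⊔ Vm) :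
    ⟪vp, vm⟫_ℂ = ⟪vp, j⟫_ℂ * ⟪j, vm⟫_ℂ / (N : ℂ) := by
  obtain ⟨x, hx, p, hp, rfl⟩ := Submodule.mem_sup.mp hvp
  obtain ⟨y, hy, m, hm, rfl⟩ := Submodule.mem_sup.mp hvm
  obtain ⟨a, rfl⟩ := Submodule.mem_span_singleton.mp hx
  obtain ⟨b, rfl⟩ := Submodule.mem_span_singleton.mp hy
  have hjp : ⟪j, p⟫_ℂ = 0 := h0p j (Submodule.mem_span_singleton_self j) p hp
  have hpj : ⟪p, j⟫_ℂ = 0 := by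
    rw [← inner_conj_symm, hjp, map_zero]
  have hjm : ⟪j, m⟫_ℂ = 0 := h0m j (Submodule.mem_span_singleton_self j) m hm
  have hmj : ⟪m, j⟫_ℂ = 0 := by
    rw [← inner_conj_symm, hjm, map_zero]
  have hpm' : ⟪p, m⟫_ℂ = 0 := hpm p hp m hm
  have hN0 : (N : ℂ) ≠ 0 := by exact_mod_cast hN.ne'
  simp only [inner_add_add_self, inner_add_left, inner_add_right, inner_smul_left,
    inner_smul_right, hj, hjp, hpj, hjm, hmj, hpm', mul_zero, add_zero, zero_add]
  field_simp
end

section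
/- Let Q be a generalised quadrangle of order (s, s^2), s > 1 odd, with point set P of size (s+1)(s^3+1). Let H ⊆ P be a hemisystem of points, meaning |H| = |P|/2 and the characteristic function of H lies in V^0 ⊕ V^-, where V^0, V^+, V^- are the eigenspaces of the adjacency matrix A with eigenvalues s(s^2+1), s−1, −s^2−1 respectively. Then for any two noncollinear points x, y ∈ H, the number μ of points of H collinear with both x and y equals (s−1)^2/2. -/
open scoped Classical

/-- Two points are collinear in a point-line geometry: distinct and on a common line. -/
def Collin {P L : Type*} (mem : P → L → Prop) (p q : P) : Prop :=
  p ≠ q ∧ ∃ l, mem p l ∧ mem q l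

/-- A generalised quadrangle of order `(s, t)`. -/
def IsGQ {P L : Type*} (mem : P → L → Prop) (s t : ℕ) : Prop :=
  (∀ p q l l', p ≠ q → mem p l → mem q l → mem p l' → mem q l' → l = l') ∧
  (∀ l, Nat.card {p | mem p l} = s + 1) ∧
  (∀ p, Nat.card {l | mem p l} = t + 1) ∧
  (∀ p l, ¬ mem p l → ∃! q, mem q l ∧ Collin mem p q)

/-- The adjacency matrix (over `ℚ`) of the collinearity graph. -/
noncomputable def adjMat {P L : Type*} [Fintype P] (mem : P → L → Prop) :
    Matrix P P ℚ :=
  fun p q => if Collin mem p q then 1 else 0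

section GQ
variable {P L : Type*} {mem : P → L → Prop} {s t : ℕ}

lemma collin_symm {p q : P} (h : Collin mem p q) : Collin mem q p :=
  ⟨h.1.symm, h.2.imp fun _ hl => ⟨hl.2, hl.1⟩⟩

lemma collin_irrefl (p : P) : ¬ Collin mem p p := fun h => h.1 rfl

lemma collin_of_mem {p q : P} {l : L} (hp : mem p l) (hq : mem q l) (hne : p ≠ q) :
    Collin mem p q := ⟨hne, l, hp, hq⟩

lemma gq_tri (hgq : IsGQ mem s t) {p u v : P} {l : L} (hu : mem u l) (hv : mem v l)
    (huv : u ≠ v) (hpu : Collin mem p u) (hpv : Collin mem p v) : mem p l := by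
  by_contra hpl
  obtain ⟨q, _, huniq⟩ := hgq.2.2.2 p l hpl
  exact huv ((huniq u ⟨hu, hpu⟩).trans (huniq v ⟨hv, hpv⟩).symm)

lemma pencil_finite (hgq : IsGQ mem s t) (p : P) : {l | mem p l}.Finite := by
  rw [← Set.finite_coe_iff]
  have := hgq.2.2.1 p
  have : 0 < Nat.card {l | mem p l} := by omega
  exact (Nat.card_pos_iff.mp this).2


lemma line_ncard (hgq : IsGQ mem s t) (l : L) : {p | mem p l}.ncard = s + 1 := by
  rw [← Nat.card_coe_set_eq]; exact hgq.2.1 l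

lemma pencil_ncard (hgq : IsGQ mem s t) (p : P) : {l | mem p l}.ncard = t + 1 := by
  rw [← Nat.card_coe_set_eq]; exact hgq.2.2.1 p

/-- two noncollinear points have exactly t+1 common neighbours -/
lemma perp2_ncard (hgq : IsGQ mem s t) {x y : P} (hxy : ¬ Collin mem x y) (hne : x ≠ y) :
    {z | Collin mem z x ∧ Collin mem z y}.ncard = t + 1 := by
  classical
  -- for each line l through x, the unique point of l collinear with y
  have hynotl : ∀ l, mem x l → ¬ mem y l := fun l hxl hyl =>
    hxy (collin_of_mem hxl hyl hne)
  set g : L → P := fun l =>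
    if h : ¬ mem y l then (hgq.2.2.2 y l h).exists.choose else x with hg
  have hgspec : ∀ l, mem x l → mem (g l) l ∧ Collin mem y (g l) := by
    intro l hxl
    have h := hynotl l hxl
    simp only [hg, dif_pos h]
    exact (hgq.2.2.2 y l h).exists.choose_spec
  have himg : g '' {l | mem x l} = {z | Collin mem z x ∧ Collin mem z y} := by
    ext z
    constructor
    · rintro ⟨l, hxl, rfl⟩
      obtain ⟨hmem, hcol⟩ := hgspec l hxl
      have hzx : g l ≠ x := fun h => hxy (collin_symm (h ▸ hcol))
      exact ⟨collin_of_mem hmem hxl hzx, collin_symm hcol⟩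
    · rintro ⟨hzx, hzy⟩
      obtain ⟨hne', l, hzl, hxl⟩ := hzx
      refine ⟨l, hxl, ?_⟩
      obtain ⟨hmem, hcol⟩ := hgspec l hxl
      have h := hynotl l hxl
      exact (hgq.2.2.2 y l h).unique (y₁ := g l) (y₂ := z) ⟨hmem, hcol⟩ ⟨hzl, collin_symm hzy⟩
  have hinj : Set.InjOn g {l | mem x l} := by
    intro l hl l' hl' heq
    obtain ⟨hm, hc⟩ := hgspec l hl
    obtain ⟨hm', _⟩ := hgspec l' hl'
    have hgx : g l ≠ x := fun h => hxy (collin_symm (h ▸ hc))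
    have hm2 : mem (g l) l' := by rw [heq]; exact hm'
    exact hgq.1 (g l) x l l' hgx hm hl hm2 hl'
  rw [← himg, Set.ncard_image_of_injOn hinj, ← Nat.card_coe_set_eq, hgq.2.2.1 x]

lemma perp_ncard [Fintype P] (hgq : IsGQ mem s t) (x : P) :
    {z | Collin mem z x}.ncard = (t + 1) * s := by
  classical
  set LF : Finset L := (pencil_finite hgq x).toFinset with hLF
  set F : L → Finset P := fun l => {p | mem p l}.toFinset \ {x} with hF
  have hset : {z | Collin mem z x}.toFinset = LF.biUnion F := by
    ext z
    simp only [Set.mem_toFinset, Set.mem_setOf_eq, Finset.mem_biUnion, hLF, hF,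
      Set.Finite.mem_toFinset, Finset.mem_sdiff, Finset.mem_singleton]
    constructor
    · rintro ⟨hne, l, hzl, hxl⟩
      exact ⟨l, hxl, by simpa using hzl, hne⟩
    · rintro ⟨l, hxl, hzl, hne⟩
      exact ⟨hne, l, by simpa using hzl, hxl⟩
  have hdisj : ∀ l ∈ LF, ∀ l' ∈ LF, l ≠ l' → Disjoint (F l) (F l') := by
    intro l hl l' hl' hne'
    rw [Finset.disjoint_left]
    intro z hz hz'
    simp only [hF, Finset.mem_sdiff, Set.mem_toFinset, Set.mem_setOf_eq,
      Finset.mem_singleton] at hz hz'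
    have hxl : mem x l := by simpa [hLF] using hl
    have hxl' : mem x l' := by simpa [hLF] using hl'
    exact hne' (hgq.1 z x l l' hz.2 hz.1 hxl hz'.1 hxl')
  have hcard : ∀ l ∈ LF, (F l).card = s := by
    intro l hl
    have hxl : mem x l := by simpa [hLF] using hl
    have h1 : ({p | mem p l}.toFinset).card = s + 1 := by
      rw [← Set.ncard_eq_toFinset_card', line_ncard hgq]
    rw [hF]
    rw [Finset.card_sdiff_of_subset (Finset.singleton_subset_iff.mpr (by simp only [Set.mem_toFinset, Set.mem_setOf_eq]; exact hxl))]
    rw [h1, Finset.card_singleton]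
    omega
  have hLFcard : LF.card = t + 1 := by
    rw [hLF, ← Set.ncard_eq_toFinset_card _ (pencil_finite hgq x), pencil_ncard hgq]
  rw [Set.ncard_eq_toFinset_card', hset, Finset.card_biUnion hdisj,
    Finset.sum_congr rfl hcard, Finset.sum_const, smul_eq_mul, hLFcard]

lemma perp2_coclique (hgq : IsGQ mem s t) {x y u v : P} (hxy : ¬ Collin mem x y)
    (hne : x ≠ y) (hu : Collin mem u x ∧ Collin mem u y)
    (hv : Collin mem v x ∧ Collin mem v y) (huv : u ≠ v) : ¬ Collin mem u v := by
  rintro ⟨-, l, hul, hvl⟩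
  have hxl : mem x l := gq_tri hgq hul hvl huv (collin_symm hu.1) (collin_symm hv.1)
  have hyl : mem y l := gq_tri hgq hul hvl huv (collin_symm hu.2) (collin_symm hv.2)
  exact hxy (collin_of_mem hxl hyl hne)

lemma tangent_ncard (hgq : IsGQ mem s t) {x y p : P} (hxy : ¬ Collin mem x y)
    (hne : x ≠ y) (hpx : Collin mem p x) (hpy : ¬ Collin mem p y) :
    {z | (Collin mem z x ∧ Collin mem z y) ∧ Collin mem z p}.ncard = 1 := by
  obtain ⟨hpxne, l, hpl, hxl⟩ := hpx
  have hyl : ¬ mem y l := fun h => hxy (collin_of_mem hxl h hne)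
  obtain ⟨u, ⟨hul, hyu⟩, huniq⟩ := hgq.2.2.2 y l hyl
  have hux : u ≠ x := fun h => hxy (collin_symm (h ▸ hyu))
  have hup : u ≠ p := fun h => hpy (collin_symm (h ▸ hyu))
  rw [Set.ncard_eq_one]
  refine ⟨u, ?_⟩
  ext z
  simp only [Set.mem_setOf_eq, Set.mem_singleton_iff]
  constructor
  · rintro ⟨⟨hzx, hzy⟩, hzp⟩
    have hzl : mem z l := gq_tri hgq hpl hxl hpxne hzp hzx
    exact huniq z ⟨hzl, collin_symm hzy⟩
  · rintro rfl
    exact ⟨⟨collin_of_mem hul hxl hux, collin_symm hyu⟩, collin_of_mem hul hpl hup⟩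

lemma mperp_ext_ncard [Fintype P] (hgq : IsGQ mem s t) {x y u : P} (hxy : ¬ Collin mem x y)
    (hne : x ≠ y) (hu : Collin mem u x ∧ Collin mem u y) :
    ({p | Collin mem p u} ∩
      {p | p ≠ x ∧ p ≠ y ∧ ¬ Collin mem p x ∧ ¬ Collin mem p y}).ncard
      + 2 * s = (t + 1) * s := by
  obtain ⟨hux, huy⟩ := hu
  obtain ⟨huxne, lx, hulx, hxlx⟩ := hux
  obtain ⟨huyne, ly, huly, hyly⟩ := huy
  have hlxy : ¬ mem y lx := fun h => hxy (collin_of_mem hxlx h hne)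
  have hlyx : ¬ mem x ly := fun h => hxy (collin_of_mem h hyly hne)
  have hlxly : lx ≠ ly := by rintro rfl; exact hlxy hyly
  set A : Set P := {p | mem p lx} \ {u, x} with hA
  set B : Set P := {p | mem p ly} \ {u, y} with hB
  set R : Set P := ({x, y} ∪ A) ∪ B with hR
  have hRsub : R ⊆ {p | Collin mem p u} := by
    intro p hp
    simp only [hR, Set.mem_union] at hp
    rcases hp with (hp | hp) | hp
    · rcases hp with rfl | hp
      · exact collin_symm ⟨huxne, lx, hulx, hxlx⟩
      · rcases hp with rfl
        exact collin_symm ⟨huyne, ly, huly, hyly⟩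
    · obtain ⟨hpl, hpn⟩ := hp
      have hpu : p ≠ u := fun h => hpn (Or.inl h)
      exact collin_of_mem hpl hulx hpu
    · obtain ⟨hpl, hpn⟩ := hp
      have hpu : p ≠ u := fun h => hpn (Or.inl h)
      exact collin_of_mem hpl huly hpu
  have heq : {p | Collin mem p u} \ R =
      {p | Collin mem p u} ∩
        {p | p ≠ x ∧ p ≠ y ∧ ¬ Collin mem p x ∧ ¬ Collin mem p y} := by
    ext p
    simp only [Set.mem_diff, Set.mem_inter_iff, Set.mem_setOf_eq, hR, Set.mem_union,
      Set.mem_insert_iff, Set.mem_singleton_iff, not_or]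
    constructor
    · rintro ⟨hpu, hpR⟩
      obtain ⟨⟨⟨hnx, hny⟩, hnA⟩, hnB⟩ := hpR
      refine ⟨hpu, hnx, hny, ?_, ?_⟩
      · intro hpx
        have hpl : mem p lx := gq_tri hgq hulx hxlx huxne hpu hpx
        exact hnA ⟨hpl, by simp [hpu.1, hpx.1]⟩
      · intro hpy
        have hpl : mem p ly := gq_tri hgq huly hyly huyne hpu hpy
        exact hnB ⟨hpl, by simp [hpu.1, hpy.1]⟩
    · rintro ⟨hpu, hnx, hny, hnpx, hnpy⟩
      refine ⟨hpu, ⟨⟨hnx, hny⟩, ?_⟩, ?_⟩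
      · rintro ⟨hpl, -⟩
        exact hnpx (collin_of_mem hpl hxlx hnx)
      · rintro ⟨hpl, -⟩
        exact hnpy (collin_of_mem hpl hyly hny)
  have hAcard : A.ncard + 2 = s + 1 := by
    have hsub : ({u, x} : Set P) ⊆ {p | mem p lx} := by
      rintro p (rfl | rfl) <;> [exact hulx; exact hxlx]
    have h2 := Set.ncard_diff_add_ncard_of_subset hsub
    rw [Set.ncard_pair huxne, line_ncard hgq] at h2
    exact h2
  have hBcard : B.ncard + 2 = s + 1 := by
    have hsub : ({u, y} : Set P) ⊆ {p | mem p ly} := by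
      rintro p (rfl | rfl) <;> [exact huly; exact hyly]
    have h2 := Set.ncard_diff_add_ncard_of_subset hsub
    rw [Set.ncard_pair huyne, line_ncard hgq] at h2
    exact h2
  have hd1 : Disjoint ({x, y} : Set P) A := by
    rw [Set.disjoint_left]
    rintro a (rfl | rfl) hb
    · exact hb.2 (Or.inr rfl)
    · exact hlxy hb.1
  have hd2 : Disjoint ({x, y} : Set P) B := by
    rw [Set.disjoint_left]
    rintro a (rfl | rfl) hb
    · exact hlyx hb.1
    · exact hb.2 (Or.inr rfl)
  have hd3 : Disjoint A B := by
    rw [Set.disjoint_left]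
    rintro a ha hb
    have hane : a ≠ u := fun h => ha.2 (Or.inl h)
    exact hlxly (hgq.1 a u lx ly hane ha.1 hulx hb.1 huly)
  have hRcard : R.ncard = 2 + (A.ncard + B.ncard) := by
    rw [hR, Set.ncard_union_eq (Set.disjoint_union_left.mpr ⟨hd2, hd3⟩),
      Set.ncard_union_eq hd1, Set.ncard_pair hne]
    ring
  have hdiff := Set.ncard_diff_add_ncard_of_subset hRsub
  rw [heq, perp_ncard hgq] at hdiff
  omega

lemma perp2_ext_ncard [Fintype P] (hgq : IsGQ mem s t) {x y u v : P} (hxy : ¬ Collin mem x y)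
    (hne : x ≠ y) (hu : Collin mem u x ∧ Collin mem u y)
    (hv : Collin mem v x ∧ Collin mem v y) (huv : u ≠ v) :
    ({z | Collin mem z u ∧ Collin mem z v} ∩
      {p | p ≠ x ∧ p ≠ y ∧ ¬ Collin mem p x ∧ ¬ Collin mem p y}).ncard + 2 = t + 1 := by
  have hnuv : ¬ Collin mem u v := perp2_coclique hgq hxy hne hu hv huv
  have htot : {z | Collin mem z u ∧ Collin mem z v}.ncard = t + 1 :=
    perp2_ncard hgq hnuv huv
  have hkey : ∀ a, Collin mem u a → Collin mem v a →
      ∀ w, Collin mem w u → Collin mem w v → w ≠ a → ¬ Collin mem w a := by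
    intro a hua hva w hwu hwv hwa hca
    obtain ⟨hune, lu, hulu, halu⟩ := hua
    obtain ⟨hvne, lv, hvlv, halv⟩ := hva
    have h1 : mem w lu := gq_tri hgq hulu halu hune hwu hca
    have h2 : mem w lv := gq_tri hgq hvlv halv hvne hwv hca
    have hl : lu ≠ lv := by
      rintro rfl
      exact hnuv (collin_of_mem hulu hvlv huv)
    exact hl (hgq.1 w a lu lv hwa h1 halu h2 halv)
  have hsub : ({x, y} : Set P) ⊆ {z | Collin mem z u ∧ Collin mem z v} := by
    rintro a (rfl | rfl)
    · exact ⟨collin_symm hu.1, collin_symm hv.1⟩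
    · exact ⟨collin_symm hu.2, collin_symm hv.2⟩
  have heq : {z | Collin mem z u ∧ Collin mem z v} \ ({x, y} : Set P) =
      {z | Collin mem z u ∧ Collin mem z v} ∩
        {p | p ≠ x ∧ p ≠ y ∧ ¬ Collin mem p x ∧ ¬ Collin mem p y} := by
    ext w
    simp only [Set.mem_diff, Set.mem_inter_iff, Set.mem_setOf_eq, Set.mem_insert_iff,
      Set.mem_singleton_iff, not_or]
    constructor
    · rintro ⟨⟨hwu, hwv⟩, hwx, hwy⟩
      exact ⟨⟨hwu, hwv⟩, hwx, hwy,
        hkey x hu.1 hv.1 w hwu hwv hwx, hkey y hu.2 hv.2 w hwu hwv hwy⟩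
    · rintro ⟨hw, hwx, hwy, -, -⟩
      exact ⟨hw, hwx, hwy⟩
  have h2 := Set.ncard_diff_add_ncard_of_subset hsub
  rw [Set.ncard_pair hne, htot, heq] at h2
  exact h2

lemma ext_ncard [Fintype P] (hgq : IsGQ mem s t) {x y : P} (hxy : ¬ Collin mem x y)
    (hne : x ≠ y) :
    {p | p ≠ x ∧ p ≠ y ∧ ¬ Collin mem p x ∧ ¬ Collin mem p y}.ncard
      + 2 + 2 * ((t + 1) * s) = Fintype.card P + (t + 1) := by
  have h1 := Set.ncard_union_add_ncard_inter {p | Collin mem p x} {p | Collin mem p y}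
    (Set.toFinite _) (Set.toFinite _)
  have hMeq : {p | Collin mem p x} ∩ {p | Collin mem p y}
      = {z | Collin mem z x ∧ Collin mem z y} := rfl
  rw [hMeq, perp2_ncard hgq hxy hne, perp_ncard hgq, perp_ncard hgq] at h1
  have hd : Disjoint ({x, y} : Set P) ({p | Collin mem p x} ∪ {p | Collin mem p y}) := by
    rw [Set.disjoint_left]
    rintro a (rfl | rfl) (hb | hb)
    · exact collin_irrefl a hb
    · exact hxy hb
    · exact hxy (collin_symm hb)
    · exact collin_irrefl a hb
  have h4 : (({x, y} : Set P) ∪ ({p | Collin mem p x} ∪ {p | Collin mem p y})).ncard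
      = 2 + ({p | Collin mem p x} ∪ {p | Collin mem p y}).ncard := by
    rw [Set.ncard_union_eq hd, Set.ncard_pair hne]
  have hsub : (({x, y} : Set P) ∪ ({p | Collin mem p x} ∪ {p | Collin mem p y}))
      ⊆ Set.univ := Set.subset_univ _
  have h5 := Set.ncard_diff_add_ncard_of_subset hsub
  rw [Set.ncard_univ, Nat.card_eq_fintype_card] at h5
  have heq : Set.univ \ (({x, y} : Set P) ∪ ({p | Collin mem p x} ∪ {p | Collin mem p y}))
      = {p | p ≠ x ∧ p ≠ y ∧ ¬ Collin mem p x ∧ ¬ Collin mem p y} := by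
    ext p
    simp only [Set.mem_diff, Set.mem_univ, true_and, Set.mem_union, Set.mem_insert_iff,
      Set.mem_singleton_iff, Set.mem_setOf_eq, not_or]
    tauto
  rw [heq] at h5
  omega

lemma sum_ind [Fintype P] (S : Set P) (f : P → Prop) :
    ∑ q ∈ S.toFinset, (if f q then (1 : ℚ) else 0) = (({z | f z} ∩ S).ncard : ℚ) := by
  classical
  rw [Finset.sum_boole]
  congr 1
  rw [Set.ncard_eq_toFinset_card']
  congr 1
  ext q
  simp only [Finset.mem_filter, Set.mem_toFinset, Set.mem_inter_iff, Set.mem_setOf_eq]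
  tauto

lemma ind_mul_ind (a b : Prop) :
    (if a then (1 : ℚ) else 0) * (if b then (1 : ℚ) else 0)
      = if a ∧ b then (1 : ℚ) else 0 := by
  by_cases ha : a <;> by_cases hb : b <;> simp [ha, hb]

lemma triad_ncard [Fintype P] (hgq : IsGQ mem s (s ^ 2))
    (hcardP : Fintype.card P = (s + 1) * (s ^ 3 + 1)) {x y p : P}
    (hxy : ¬ Collin mem x y) (hne : x ≠ y)
    (hpx : ¬ Collin mem p x) (hpy : ¬ Collin mem p y) (hpnx : p ≠ x) (hpny : p ≠ y) :
    {z | (Collin mem z x ∧ Collin mem z y) ∧ Collin mem z p}.ncard = s + 1 := by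
  classical
  set E : Set P := {q | q ≠ x ∧ q ≠ y ∧ ¬ Collin mem q x ∧ ¬ Collin mem q y} with hE
  set M : Set P := {z | Collin mem z x ∧ Collin mem z y} with hM
  set MF := M.toFinset with hMF
  set EF := E.toFinset with hEF
  have hswap : ∀ u : P, {q | Collin mem u q} = {q | Collin mem q u} :=
    fun u => Set.ext fun q => ⟨collin_symm, collin_symm⟩
  have hMcard : M.ncard = s ^ 2 + 1 := perp2_ncard hgq hxy hne
  have hMFcard : MF.card = s ^ 2 + 1 := by
    rw [hMF, ← Set.ncard_eq_toFinset_card']; exact hMcard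
  set n : P → ℚ := fun q => ∑ u ∈ MF, (if Collin mem u q then (1 : ℚ) else 0) with hn
  -- single-perp count
  have hbQ : ∀ u ∈ MF,
      (∑ q ∈ EF, if Collin mem u q then (1 : ℚ) else 0)
        = ((s : ℚ) ^ 2 + 1) * s - 2 * s := by
    intro u hu
    have hu' : u ∈ M := by rw [hMF, Set.mem_toFinset] at hu; exact hu
    have h3 : (∑ q ∈ EF, if Collin mem u q then (1 : ℚ) else 0)
        = (({z | Collin mem u z} ∩ E).ncard : ℚ) := by
      rw [hEF]; convert sum_ind E (fun q => Collin mem u q) using 2 <;> congr!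
    rw [h3, hswap u]
    have h := mperp_ext_ncard hgq hxy hne hu'
    have h2 : ((({q | Collin mem q u} ∩ E).ncard : ℚ)) + 2 * s
        = ((s : ℚ) ^ 2 + 1) * s := by exact_mod_cast h
    linarith
  -- double-perp count
  have hcQ : ∀ u ∈ MF, ∀ v ∈ MF, u ≠ v →
      (∑ q ∈ EF, if Collin mem u q ∧ Collin mem v q then (1 : ℚ) else 0)
        = (s : ℚ) ^ 2 - 1 := by
    intro u hu v hv huv
    have hu' : u ∈ M := by rw [hMF, Set.mem_toFinset] at hu; exact hu
    have hv' : v ∈ M := by rw [hMF, Set.mem_toFinset] at hv; exact hv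
    have h3 : (∑ q ∈ EF, if Collin mem u q ∧ Collin mem v q then (1 : ℚ) else 0)
        = (({z | Collin mem u z ∧ Collin mem v z} ∩ E).ncard : ℚ) := by
      rw [hEF]; convert sum_ind E (fun q => Collin mem u q ∧ Collin mem v q) using 2 <;> congr!
    rw [h3]
    have hsets : {z | Collin mem u z ∧ Collin mem v z} = {z | Collin mem z u ∧ Collin mem z v} :=
      Set.ext fun q => ⟨fun h => ⟨collin_symm h.1, collin_symm h.2⟩,
        fun h => ⟨collin_symm h.1, collin_symm h.2⟩⟩
    rw [hsets]
    have h := perp2_ext_ncard hgq hxy hne hu' hv' huv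
    have h2 : ((({z | Collin mem z u ∧ Collin mem z v} ∩ E).ncard : ℚ)) + 2
        = (s : ℚ) ^ 2 + 1 := by exact_mod_cast h
    linarith
  -- |E|
  have hdN := ext_ncard hgq hxy hne
  rw [hcardP] at hdN
  have hNE : ((EF.card : ℚ))
      = ((s : ℚ) + 1) * ((s : ℚ) ^ 3 + 1) + ((s : ℚ) ^ 2 + 1) - 2
        - 2 * (((s : ℚ) ^ 2 + 1) * s) := by
    have : ((E.ncard : ℚ)) + 2 + 2 * (((s : ℚ) ^ 2 + 1) * (s : ℚ))
        = ((s : ℚ) + 1) * ((s : ℚ) ^ 3 + 1) + ((s : ℚ) ^ 2 + 1) := by exact_mod_cast hdN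
    rw [hEF, ← Set.ncard_eq_toFinset_card']
    linarith
  -- S1
  have hS1 : ∑ q ∈ EF, n q = ((s : ℚ) ^ 2 + 1) * (((s : ℚ) ^ 2 + 1) * s - 2 * s) := by
    rw [hn]
    rw [Finset.sum_comm]
    rw [Finset.sum_congr rfl hbQ, Finset.sum_const, hMFcard, nsmul_eq_mul]
    push_cast
    ring
  -- S2
  have hS2 : ∑ q ∈ EF, (n q) ^ 2
      = ((s : ℚ) ^ 2 + 1) * (((s : ℚ) ^ 2 + 1) * s - 2 * s)
        + ((s : ℚ) ^ 2 + 1) * (s : ℚ) ^ 2 * ((s : ℚ) ^ 2 - 1) := by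
    have hsq : ∀ q, (n q) ^ 2 = ∑ u ∈ MF, ∑ v ∈ MF,
        (if Collin mem u q ∧ Collin mem v q then (1 : ℚ) else 0) := by
      intro q
      rw [sq, hn, Finset.sum_mul_sum]
      exact Finset.sum_congr rfl fun u _ => Finset.sum_congr rfl fun v _ =>
        ind_mul_ind _ _
    rw [Finset.sum_congr rfl fun q _ => hsq q]
    rw [Finset.sum_comm]
    have hinner2 : ∀ u ∈ MF, (∑ q ∈ EF, ∑ v ∈ MF,
        (if Collin mem u q ∧ Collin mem v q then (1 : ℚ) else 0))
        = ∑ v ∈ MF, ∑ q ∈ EF,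
        (if Collin mem u q ∧ Collin mem v q then (1 : ℚ) else 0) := fun u _ => Finset.sum_comm
    rw [Finset.sum_congr rfl hinner2]
    have hinner : ∀ u ∈ MF, (∑ v ∈ MF, ∑ q ∈ EF,
        (if Collin mem u q ∧ Collin mem v q then (1 : ℚ) else 0))
        = (((s : ℚ) ^ 2 + 1) * s - 2 * s) + (s : ℚ) ^ 2 * ((s : ℚ) ^ 2 - 1) := by
      intro u hu
      rw [← Finset.add_sum_erase MF _ hu]
      have hdiag : (∑ q ∈ EF, (if Collin mem u q ∧ Collin mem u q then (1 : ℚ) else 0))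
          = ((s : ℚ) ^ 2 + 1) * s - 2 * s := by
        have heqq : ∀ q ∈ EF, (if Collin mem u q ∧ Collin mem u q then (1 : ℚ) else 0)
            = (if Collin mem u q then (1 : ℚ) else 0) := by
          intro q _
          by_cases h : Collin mem u q <;> simp [h]
        rw [Finset.sum_congr rfl heqq]
        exact hbQ u hu
      rw [hdiag]
      have hoff : ∀ v ∈ MF.erase u, (∑ q ∈ EF,
          (if Collin mem u q ∧ Collin mem v q then (1 : ℚ) else 0)) = (s : ℚ) ^ 2 - 1 := by
        intro v hv
        exact hcQ u hu v (Finset.mem_of_mem_erase hv) (Finset.ne_of_mem_erase hv).symm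
      rw [Finset.sum_congr rfl hoff, Finset.sum_const, Finset.card_erase_of_mem hu, hMFcard,
        nsmul_eq_mul]
      push_cast
      ring
    rw [Finset.sum_congr rfl hinner, Finset.sum_const, hMFcard, nsmul_eq_mul]
    push_cast
    ring
  -- variance
  have hvar : ∑ q ∈ EF, (n q - ((s : ℚ) + 1)) ^ 2 = 0 := by
    have hexp : ∀ q ∈ EF, (n q - ((s : ℚ) + 1)) ^ 2
        = (n q) ^ 2 - 2 * ((s : ℚ) + 1) * n q + ((s : ℚ) + 1) ^ 2 := fun q _ => by ring
    have hsplit : ∑ q ∈ EF, (n q - ((s : ℚ) + 1)) ^ 2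
        = (∑ q ∈ EF, (n q) ^ 2) - 2 * ((s : ℚ) + 1) * (∑ q ∈ EF, n q)
          + ((s : ℚ) + 1) ^ 2 * (EF.card : ℚ) := by
      rw [Finset.sum_congr rfl hexp, Finset.sum_add_distrib, Finset.sum_sub_distrib,
        ← Finset.mul_sum, Finset.sum_const, nsmul_eq_mul]
      ring
    rw [hsplit, hS1, hS2, hNE]
    ring
  have hzero : ∀ q ∈ EF, (n q - ((s : ℚ) + 1)) ^ 2 = 0 :=
    (Finset.sum_eq_zero_iff_of_nonneg (fun q _ => sq_nonneg _)).mp hvar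
  have hpE : p ∈ EF := by rw [hEF, Set.mem_toFinset]; exact ⟨hpnx, hpny, hpx, hpy⟩
  have hnp : n p = (s : ℚ) + 1 := by
    have h0 := hzero p hpE
    have := pow_eq_zero_iff (n := 2) (by norm_num) |>.mp h0
    linarith [sub_eq_zero.mp this]
  have hnp2 : n p = ((({z | Collin mem z p} ∩ M).ncard : ℚ)) := by
    have h3 : (∑ u ∈ MF, if Collin mem u p then (1 : ℚ) else 0)
        = (({z | Collin mem z p} ∩ M).ncard : ℚ) := by
      rw [hMF]; convert sum_ind M (fun u => Collin mem u p) using 2 <;> congr!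
    exact h3
  have hsetseq : {z | (Collin mem z x ∧ Collin mem z y) ∧ Collin mem z p}
      = {z | Collin mem z p} ∩ M := by
    ext z
    simp only [Set.mem_setOf_eq, Set.mem_inter_iff, hM]
    tauto
  rw [hsetseq]
  have : ((({z | Collin mem z p} ∩ M).ncard : ℚ)) = ((s + 1 : ℕ) : ℚ) := by
    rw [← hnp2, hnp]; push_cast; ring
  exact_mod_cast this

lemma sum_ind_univ [Fintype P] (f : P → Prop) :
    ∑ q : P, (if f q then (1 : ℚ) else 0) = ({z | f z}.ncard : ℚ) := by
  classical
  rw [Finset.sum_boole]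
  congr 1
  rw [Set.ncard_eq_toFinset_card']
  congr 1
  ext q
  simp


noncomputable def chiM (mem : P → L → Prop) (x y q : P) : ℚ :=
  if Collin mem q x ∧ Collin mem q y then 1 else 0

noncomputable def Tv (mem : P → L → Prop) (s : ℕ) (x y q : P) : ℚ :=
  chiM mem x y q + (if q = x then (s : ℚ) else 0) + (if q = y then (s : ℚ) else 0)

lemma sum_delta [Fintype P] (a : P) (f : P → ℚ) (cst : ℚ) :
    ∑ q, (if q = a then cst else 0) * f q = cst * f a := by
  classical
  have h : ∀ q, (if q = a then cst else 0) * f q = (if q = a then cst * f a else 0) := by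
    intro q
    by_cases h : q = a
    · subst h; simp
    · simp [h]
  rw [Finset.sum_congr rfl (fun q _ => h q), Finset.sum_ite_eq']
  simp

lemma TA_eq [Fintype P] (hgq : IsGQ mem s (s ^ 2))
    (hcardP : Fintype.card P = (s + 1) * (s ^ 3 + 1)) {x y : P}
    (hxy : ¬ Collin mem x y) (hne : x ≠ y) (p : P) :
    ∑ q, Tv mem s x y q * (if Collin mem q p then (1 : ℚ) else 0)
      = ((s : ℚ) - 1) * Tv mem s x y p + ((s : ℚ) + 1) := by
  classical
  have hsplit : ∑ q, Tv mem s x y q * (if Collin mem q p then (1 : ℚ) else 0)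
      = (∑ q, chiM mem x y q * (if Collin mem q p then (1 : ℚ) else 0))
        + (s : ℚ) * (if Collin mem x p then (1 : ℚ) else 0)
        + (s : ℚ) * (if Collin mem y p then (1 : ℚ) else 0) := by
    have hexp : ∀ q, Tv mem s x y q * (if Collin mem q p then (1 : ℚ) else 0)
        = chiM mem x y q * (if Collin mem q p then (1 : ℚ) else 0)
          + (if q = x then (s : ℚ) else 0) * (if Collin mem q p then (1 : ℚ) else 0)
          + (if q = y then (s : ℚ) else 0) * (if Collin mem q p then (1 : ℚ) else 0) := by
      intro q; rw [Tv]; ring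
    rw [Finset.sum_congr rfl (fun q _ => hexp q), Finset.sum_add_distrib,
      Finset.sum_add_distrib,
      sum_delta x (fun q => if Collin mem q p then (1 : ℚ) else 0) (s : ℚ),
      sum_delta y (fun q => if Collin mem q p then (1 : ℚ) else 0) (s : ℚ)]
  have hchi : ∑ q, chiM mem x y q * (if Collin mem q p then (1 : ℚ) else 0)
      = ({z | (Collin mem z x ∧ Collin mem z y) ∧ Collin mem z p}.ncard : ℚ) := by
    have h : ∀ q, chiM mem x y q * (if Collin mem q p then (1 : ℚ) else 0)
        = @ite ℚ ((Collin mem q x ∧ Collin mem q y) ∧ Collin mem q p)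
            (Classical.propDecidable _) 1 0 := by
      intro q
      rw [chiM]
      by_cases h1 : Collin mem q x ∧ Collin mem q y <;> by_cases h2 : Collin mem q p <;>
        simp [h1, h2]
    rw [Finset.sum_congr rfl (fun q _ => h q)]
    exact sum_ind_univ (fun q => (Collin mem q x ∧ Collin mem q y) ∧ Collin mem q p)
  rw [hsplit, hchi]
  by_cases hp1 : p = x
  · subst hp1
    have hset : {z | (Collin mem z p ∧ Collin mem z y) ∧ Collin mem z p}
        = {z | Collin mem z p ∧ Collin mem z y} := by
      ext z; simp only [Set.mem_setOf_eq]; tauto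
    rw [hset, perp2_ncard hgq hxy hne]
    rw [if_neg (collin_irrefl p), if_neg (fun h => hxy (collin_symm h))]
    have hT : Tv mem s p y p = (s : ℚ) := by
      rw [Tv, chiM, if_neg (fun h => collin_irrefl p h.1), if_pos rfl, if_neg hne]
      ring
    rw [hT]
    push_cast
    ring
  · by_cases hp2 : p = y
    · subst hp2
      have hset : {z | (Collin mem z x ∧ Collin mem z p) ∧ Collin mem z p}
          = {z | Collin mem z x ∧ Collin mem z p} := by
        ext z; simp only [Set.mem_setOf_eq]; tauto
      rw [hset, perp2_ncard hgq hxy hne]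
      rw [if_neg hxy, if_neg (collin_irrefl p)]
      have hT : Tv mem s x p p = (s : ℚ) := by
        rw [Tv, chiM, if_neg (fun h => collin_irrefl p h.2), if_neg (Ne.symm hne), if_pos rfl]
        ring
      rw [hT]
      push_cast
      ring
    · by_cases hpx : Collin mem p x
      · by_cases hpy : Collin mem p y
        · -- p is in the perp of x and y
          have hset : {z | (Collin mem z x ∧ Collin mem z y) ∧ Collin mem z p} = ∅ := by
            ext z
            simp only [Set.mem_setOf_eq, Set.mem_empty_iff_false, iff_false, not_and]
            rintro ⟨hzx, hzy⟩ hzp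
            exact perp2_coclique hgq hxy hne ⟨hzx, hzy⟩ ⟨hpx, hpy⟩ hzp.1 hzp
          rw [hset]
          rw [if_pos (collin_symm hpx), if_pos (collin_symm hpy)]
          have hT : Tv mem s x y p = 1 := by
            rw [Tv, chiM, if_pos ⟨hpx, hpy⟩, if_neg hp1, if_neg hp2]
            ring
          rw [hT]
          simp only [Set.ncard_empty]
          push_cast
          ring
        · -- tangent at x
          rw [tangent_ncard hgq hxy hne hpx hpy]
          rw [if_pos (collin_symm hpx), if_neg (fun h => hpy (collin_symm h))]
          have hT : Tv mem s x y p = 0 := by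
            rw [Tv, chiM, if_neg (fun h => hpy h.2), if_neg hp1, if_neg hp2]
            ring
          rw [hT]
          push_cast
          ring
      · by_cases hpy : Collin mem p y
        · -- tangent at y
          have h := tangent_ncard hgq (fun h => hxy (collin_symm h)) (Ne.symm hne) hpy hpx
          have hset : {z | (Collin mem z x ∧ Collin mem z y) ∧ Collin mem z p}
              = {z | (Collin mem z y ∧ Collin mem z x) ∧ Collin mem z p} := by
            ext z; simp only [Set.mem_setOf_eq]; tauto
          rw [hset, h]
          rw [if_neg (fun h' => hpx (collin_symm h')), if_pos (collin_symm hpy)]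
          have hT : Tv mem s x y p = 0 := by
            rw [Tv, chiM, if_neg (fun h => hpx h.1), if_neg hp1, if_neg hp2]
            ring
          rw [hT]
          push_cast
          ring
        · -- exterior point
          rw [triad_ncard hgq hcardP hxy hne hpx hpy hp1 hp2]
          rw [if_neg (fun h' => hpx (collin_symm h')), if_neg (fun h' => hpy (collin_symm h'))]
          have hT : Tv mem s x y p = 0 := by
            rw [Tv, chiM, if_neg (fun h => hpx h.1), if_neg hp1, if_neg hp2]
            ring
          rw [hT]
          push_cast
          ring

end GQ

theorem stmt_8 {P L : Type*} [Fintype P] (s : ℕ) (hs : 1 < s) (hodd : Odd s)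
    (mem : P → L → Prop) (hgq : IsGQ mem s (s ^ 2))
    (hcardP : Fintype.card P = (s + 1) * (s ^ 3 + 1))
    (H : Set P) (hhalf : Nat.card H * 2 = Fintype.card P)
    -- the characteristic function of `H` lies in `V⁰ ⊕ V⁻`, i.e. it is the sum of a
    -- constant function and an eigenvector of `A` with eigenvalue `-s² - 1`
    (hspec : ∃ (c : ℚ) (w : P → ℚ),
      (∀ p, (if p ∈ H then (1 : ℚ) else 0) = c + w p) ∧
      (∀ p, Matrix.vecMul w (adjMat mem) p = (-(s : ℚ) ^ 2 - 1) * w p)) :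
    ∀ x y : P, x ∈ H → y ∈ H → ¬ Collin mem x y → x ≠ y →
      Nat.card {z : P | z ∈ H ∧ Collin mem z x ∧ Collin mem z y}
        = (s - 1) ^ 2 / 2 := by
  classical
  obtain ⟨c, w, hcw, hev⟩ := hspec
  intro x y hxH hyH hxy hne
  -- the eigen-equation, unfolded
  have hev' : ∀ p, (∑ q, w q * (if Collin mem q p then (1 : ℚ) else 0))
      = (-(s : ℚ) ^ 2 - 1) * w p := by
    intro p
    have := hev p
    simpa [Matrix.vecMul, dotProduct, adjMat] using this
  -- symmetry of the indicator
  have hindsym : ∀ q p : P, (if Collin mem q p then (1 : ℚ) else 0)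
      = (if Collin mem p q then (1 : ℚ) else 0) := by
    intro q p
    by_cases h : Collin mem q p
    · rw [if_pos h, if_pos (collin_symm h)]
    · rw [if_neg h, if_neg (fun h' => h (collin_symm h'))]
  -- degree of every vertex
  have hdeg : ∀ q : P, (∑ p, if Collin mem q p then (1 : ℚ) else 0)
      = ((s : ℚ) ^ 2 + 1) * s := by
    intro q
    have h1 : (∑ p, if Collin mem q p then (1 : ℚ) else 0)
        = ({z | Collin mem q z}.ncard : ℚ) := sum_ind_univ (fun p => Collin mem q p)
    rw [h1]
    have h2 : {z | Collin mem q z} = {z | Collin mem z q} :=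
      Set.ext fun _ => ⟨collin_symm, collin_symm⟩
    rw [h2]
    have h3 := perp_ncard hgq q
    rw [h3]
    push_cast
    ring
  -- sum of w is zero
  have hsumw : ∑ p, w p = 0 := by
    have h1 : ∑ p, (∑ q, w q * (if Collin mem q p then (1 : ℚ) else 0))
        = (-(s : ℚ) ^ 2 - 1) * ∑ p, w p := by
      rw [Finset.mul_sum]
      exact Finset.sum_congr rfl fun p _ => hev' p
    rw [Finset.sum_comm] at h1
    have h2 : ∀ q : P, (∑ p, w q * (if Collin mem q p then (1 : ℚ) else 0))
        = (((s : ℚ) ^ 2 + 1) * s) * w q := by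
      intro q
      rw [← Finset.mul_sum, hdeg q]
      ring
    rw [Finset.sum_congr rfl fun q _ => h2 q, ← Finset.mul_sum] at h1
    have h3 : ((((s : ℚ) ^ 2 + 1) * s) - (-(s : ℚ) ^ 2 - 1)) * (∑ p, w p) = 0 := by
      linear_combination h1
    rcases mul_eq_zero.mp h3 with h4 | h4
    · exfalso
      have hspos : (1 : ℚ) ≤ (s : ℚ) := by exact_mod_cast hs.le
      nlinarith
    · exact h4
  -- c = 1/2
  have hPpos : (0 : ℚ) < ((s : ℚ) + 1) * ((s : ℚ) ^ 3 + 1) := by positivity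
  have hc : c = 1 / 2 := by
    have h1 : ∑ p, (if p ∈ H then (1 : ℚ) else 0) = (H.ncard : ℚ) := by
      have := sum_ind_univ (fun p => p ∈ H)
      simpa using this
    have h2 : ∑ p, (if p ∈ H then (1 : ℚ) else 0)
        = c * (((s : ℚ) + 1) * ((s : ℚ) ^ 3 + 1)) := by
      rw [Finset.sum_congr rfl fun p _ => hcw p, Finset.sum_add_distrib, hsumw,
        Finset.sum_const, nsmul_eq_mul, Finset.card_univ, hcardP]
      push_cast
      ring
    have hA : (H.ncard : ℚ) = c * (((s : ℚ) + 1) * ((s : ℚ) ^ 3 + 1)) := h1.symm.trans h2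
    have h3 : (H.ncard : ℚ) * 2 = ((s : ℚ) + 1) * ((s : ℚ) ^ 3 + 1) := by
      have hh : H.ncard * 2 = (s + 1) * (s ^ 3 + 1) := by
        rw [← Nat.card_coe_set_eq]
        rw [hhalf, hcardP]
      exact_mod_cast hh
    have h6 : (2 * c - 1) * (((s : ℚ) + 1) * ((s : ℚ) ^ 3 + 1)) = 0 := by
      linear_combination h3 - 2 * hA
    rcases mul_eq_zero.mp h6 with h | h
    · linarith
    · exact absurd h (ne_of_gt hPpos)
  have hwx : w x = 1 / 2 := by
    have := hcw x
    rw [if_pos hxH, hc] at this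
    linarith
  have hwy : w y = 1 / 2 := by
    have := hcw y
    rw [if_pos hyH, hc] at this
    linarith
  -- T ⋅ w = 0
  have hTA := fun p => TA_eq hgq hcardP hxy hne p
  have hX1 : ∑ p, Tv mem s x y p * (∑ q, w q * (if Collin mem q p then (1 : ℚ) else 0))
      = (-(s : ℚ) ^ 2 - 1) * ∑ p, Tv mem s x y p * w p := by
    rw [Finset.mul_sum]
    refine Finset.sum_congr rfl fun p _ => ?_
    rw [hev' p]; ring
  have hX2 : ∑ p, Tv mem s x y p * (∑ q, w q * (if Collin mem q p then (1 : ℚ) else 0))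
      = ((s : ℚ) - 1) * ∑ p, Tv mem s x y p * w p := by
    have h1 : ∀ p, Tv mem s x y p * (∑ q, w q * (if Collin mem q p then (1 : ℚ) else 0))
        = ∑ q, w q * (Tv mem s x y p * (if Collin mem p q then (1 : ℚ) else 0)) := by
      intro p
      rw [Finset.mul_sum]
      refine Finset.sum_congr rfl fun q _ => ?_
      rw [hindsym p q]
      ring
    rw [Finset.sum_congr rfl fun p _ => h1 p, Finset.sum_comm]
    have h2 : ∀ q : P, (∑ p, w q * (Tv mem s x y p * (if Collin mem p q then (1 : ℚ) else 0)))
        = w q * (((s : ℚ) - 1) * Tv mem s x y q + ((s : ℚ) + 1)) := by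
      intro q
      rw [← Finset.mul_sum, hTA q]
    rw [Finset.sum_congr rfl fun q _ => h2 q]
    have h3 : ∀ q, w q * (((s : ℚ) - 1) * Tv mem s x y q + ((s : ℚ) + 1))
        = ((s : ℚ) - 1) * (Tv mem s x y q * w q) + ((s : ℚ) + 1) * w q := fun q => by ring
    rw [Finset.sum_congr rfl fun q _ => h3 q, Finset.sum_add_distrib, ← Finset.mul_sum,
      ← Finset.mul_sum, hsumw]
    ring
  have hTw : ∑ p, Tv mem s x y p * w p = 0 := by
    have h := hX1.symm.trans hX2
    have h4 : (((s : ℚ) - 1) - (-(s : ℚ) ^ 2 - 1)) * (∑ p, Tv mem s x y p * w p) = 0 := by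
      linear_combination -h
    rcases mul_eq_zero.mp h4 with h5 | h5
    · exfalso
      have hs1 : (1 : ℚ) ≤ (s : ℚ) := by exact_mod_cast hs.le
      nlinarith
    · exact h5
  -- χM ⋅ w = -s
  have hsplitT : ∑ p, Tv mem s x y p * w p
      = (∑ p, chiM mem x y p * w p) + (s : ℚ) * w x + (s : ℚ) * w y := by
    have h : ∀ p, Tv mem s x y p * w p
        = chiM mem x y p * w p + (if p = x then (s : ℚ) else 0) * w p
          + (if p = y then (s : ℚ) else 0) * w p := fun p => by rw [Tv]; ring
    rw [Finset.sum_congr rfl fun p _ => h p, Finset.sum_add_distrib, Finset.sum_add_distrib,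
      sum_delta x w (s : ℚ), sum_delta y w (s : ℚ)]
  have hchiw : ∑ p, chiM mem x y p * w p = -(s : ℚ) := by
    have h := hsplitT.symm.trans hTw
    rw [hwx, hwy] at h
    linarith
  -- |M| = s² + 1
  have hMn : ∑ p, chiM mem x y p = (s : ℚ) ^ 2 + 1 := by
    have h : ∀ p, chiM mem x y p
        = @ite ℚ (Collin mem p x ∧ Collin mem p y) (Classical.propDecidable _) 1 0 := by
      intro p
      rw [chiM]
      by_cases h1 : Collin mem p x ∧ Collin mem p y <;> simp [h1]
    rw [Finset.sum_congr rfl fun p _ => h p,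
      sum_ind_univ (fun p => Collin mem p x ∧ Collin mem p y), perp2_ncard hgq hxy hne]
    push_cast
    ring
  -- the target count
  have htar : ({z | (Collin mem z x ∧ Collin mem z y) ∧ z ∈ H}.ncard : ℚ)
      = (1 / 2) * ((s : ℚ) ^ 2 + 1) - (s : ℚ) := by
    have h1 : ∀ p, chiM mem x y p * (if p ∈ H then (1 : ℚ) else 0)
        = @ite ℚ ((Collin mem p x ∧ Collin mem p y) ∧ p ∈ H) (Classical.propDecidable _) 1 0 := by
      intro p
      rw [chiM]
      by_cases h2 : Collin mem p x ∧ Collin mem p y <;> by_cases h3 : p ∈ H <;>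
        simp [h2, h3]
    have h2 : ∑ p, chiM mem x y p * (if p ∈ H then (1 : ℚ) else 0)
        = ({z | (Collin mem z x ∧ Collin mem z y) ∧ z ∈ H}.ncard : ℚ) := by
      rw [Finset.sum_congr rfl fun p _ => h1 p]
      exact sum_ind_univ (fun p => (Collin mem p x ∧ Collin mem p y) ∧ p ∈ H)
    have h3 : ∑ p, chiM mem x y p * (if p ∈ H then (1 : ℚ) else 0)
        = c * ((s : ℚ) ^ 2 + 1) + -(s : ℚ) := by
      have h4 : ∀ p, chiM mem x y p * (if p ∈ H then (1 : ℚ) else 0)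
          = c * chiM mem x y p + chiM mem x y p * w p := by
        intro p
        rw [hcw p]
        ring
      rw [Finset.sum_congr rfl fun p _ => h4 p, Finset.sum_add_distrib, ← Finset.mul_sum,
        hMn, hchiw]
    rw [← h2, h3, hc]
    ring
  obtain ⟨k, hk⟩ := hodd
  have hsk : s = 2 * k + 1 := by omega
  have hncard : {z | (Collin mem z x ∧ Collin mem z y) ∧ z ∈ H}.ncard = 2 * k ^ 2 := by
    have h : ({z | (Collin mem z x ∧ Collin mem z y) ∧ z ∈ H}.ncard : ℚ)
        = ((2 * k ^ 2 : ℕ) : ℚ) := by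
      rw [htar, hsk]
      push_cast
      ring
    exact_mod_cast h
  have hsets : {z : P | z ∈ H ∧ Collin mem z x ∧ Collin mem z y}
      = {z | (Collin mem z x ∧ Collin mem z y) ∧ z ∈ H} := by
    ext z
    simp only [Set.mem_setOf_eq]
    tauto
  rw [Nat.card_coe_set_eq, hsets, hncard, hsk]
  have h1 : 2 * k + 1 - 1 = 2 * k := by omega
  rw [h1]
  have h2 : (2 * k) ^ 2 = 4 * k ^ 2 := by ring
  rw [h2]
  omega
end
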